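/- For every natural number 𝐧, the map ι̃ : A_𝐧 → 𝒫¹ takes values in 𝒬_𝐧, and the resulting map ι̃ : A_𝐧 → 𝒬_𝐧 is surjective. -/

import Mathlib

/-- A partition: a nonincreasing list of positive integers (possibly empty). -/
def IsPartition (p : List ℕ) : Prop := p.Pairwise (· ≥ ·) ∧ ∀ x ∈ p, 0 < x

/-- `𝒫̃`: partitions with an even number of parts in which the parts pair up:
`p₁ = p₂, p₃ = p₄, …` (stated 0-indexed). -/
def Ptilde : Set (List ℕ) :=
  {p | IsPartition p ∧ Even p.length ∧ ∀ i, p.getD (2 * i) 0 = p.getD (2 * i + 1) 0}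

/-- `𝒮^κ` for `κ ∈ {0,1}`: partitions with all parts even (and, if `κ = 0`,
an even number of parts). -/
def SK (κ : ℕ) : Set (List ℕ) :=
  {r | IsPartition r ∧ (∀ x ∈ r, x % 2 = 0) ∧ (κ = 0 → Even r.length)}

/-- `𝒮^κ_N`. -/
def SKN (κ N : ℕ) : Set (List ℕ) := {r | r ∈ SK κ ∧ r.sum = N}

/-- `𝒜^κ_{2n} = {(r_*, p_*) ∈ 𝒮^κ × 𝒫̃ : |r_*| + |p_*| = 2n}`. -/
def AK (κ n : ℕ) : Set (List ℕ × List ℕ) :=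
  {rp | rp.1 ∈ SK κ ∧ rp.2 ∈ Ptilde ∧ rp.1.sum + rp.2.sum = 2 * n}

/-- The partition whose multiset of parts is the disjoint union of the multisets of
parts of `r` and `p`: sort `r ++ p` nonincreasingly. -/
def pmerge (r p : List ℕ) : List ℕ := (r ++ p).mergeSort (fun a b => decide (b ≤ a))

/-- `𝒬`: partitions in which every even part has even multiplicity. -/
def Qset : Set (List ℕ) :=
  {c | IsPartition c ∧ ∀ j, j % 2 = 0 → Even (c.count j)}

/-- `𝒬_N`. -/
def QN (N : ℕ) : Set (List ℕ) := {c | c ∈ Qset ∧ c.sum = N}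

/-- The odd parts of `l`, listed in (nonincreasing) order with multiplicity:
`r¹ ≥ r² ≥ … ≥ r^s`. -/
def oddParts (l : List ℕ) : List ℕ := l.filter (fun x => x % 2 = 1)

/-- The set `ℛ` (conditions stated with 1-based indices `u` for the list of odd parts;
`(oddParts l).getD (u-1) 0` is `r^u`). -/
def Rset : Set (List ℕ) :=
  {l | l ∈ Qset ∧
    (l ≠ [] → l.getD 0 0 % 2 = 1) ∧
    (l ≠ [] → Even l.length → l.getD (l.length - 1) 0 % 2 = 1) ∧
    (∀ u, 1 ≤ u → u + 1 ≤ (oddParts l).length → u % 2 = 1 →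
        (oddParts l).getD u 0 < (oddParts l).getD (u - 1) 0) ∧
    (∀ u, 1 ≤ u → u + 1 ≤ (oddParts l).length → u % 2 = 0 →
        ∀ k < l.length,
          ¬((oddParts l).getD u 0 < l.getD k 0 ∧ l.getD k 0 < (oddParts l).getD (u - 1) 0))}

/-- `ℛ_N = ℛ ∩ 𝒬_N`. -/
def RN (N : ℕ) : Set (List ℕ) := {l | l ∈ Rset ∧ l.sum = N}

/-- `A_𝐧 = {(r_*, p_*) ∈ ℛ × 𝒫̃ : |r_*| + |p_*| = 𝐧}`. -/
def An (m : ℕ) : Set (List ℕ × List ℕ) :=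
  {rp | rp.1 ∈ Rset ∧ rp.2 ∈ Ptilde ∧ rp.1.sum + rp.2.sum = m}

/-! Merging adds multiplicities, and a partition lies in `𝒫̃` exactly when all of its
multiplicities are even; hence `ι̃` lands in `𝒬`. Conversely, split `c ∈ 𝒬` into `r`, the
parts of odd multiplicity taken once each, and `p`, the rest. The parts of `r` are distinct and
odd (even parts of `c` have even multiplicity), which puts `r` in `ℛ`, and every multiplicity
in `p` is even, which puts `p` in `𝒫̃`. -/

lemma IsPartition.sublist {l c : List ℕ} (hc : IsPartition c) (h : l.Sublist c) :
    IsPartition l :=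
  ⟨hc.1.sublist h, fun x hx => hc.2 x (h.subset hx)⟩

lemma pmerge_perm (r p : List ℕ) : (pmerge r p).Perm (r ++ p) :=
  List.mergeSort_perm _ _

lemma pairwise_ge_pmerge (r p : List ℕ) : (pmerge r p).Pairwise (· ≥ ·) :=
  List.pairwise_mergeSort' (· ≥ ·) (r ++ p)

lemma pmerge_eq_of_perm {r p c : List ℕ} (hc : c.Pairwise (· ≥ ·)) (h : (r ++ p).Perm c) :
    pmerge r p = c :=
  ((pmerge_perm r p).trans h).eq_of_sortedGE (pairwise_ge_pmerge r p).sortedGE hc.sortedGE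

lemma count_pmerge (r p : List ℕ) (j : ℕ) : (pmerge r p).count j = r.count j + p.count j := by
  rw [(pmerge_perm r p).count_eq, List.count_append]

lemma sum_pmerge (r p : List ℕ) : (pmerge r p).sum = r.sum + p.sum := by
  rw [(pmerge_perm r p).sum_eq, List.sum_append]

lemma even_count_of_pairs : ∀ p : List ℕ, Even p.length →
    (∀ i, p.getD (2 * i) 0 = p.getD (2 * i + 1) 0) → ∀ j, Even (p.count j)
  | [], _, _, _ => by simp
  | [_], hlen, _, _ => by simp at hlen
  | a :: b :: q, hlen, hpair, j => by
      obtain rfl : a = b := by simpa using hpair 0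
      have hq := even_count_of_pairs q (by simpa [Nat.even_add_one] using hlen)
        (fun i => by simpa [Nat.mul_add] using hpair (i + 1)) j
      rw [List.count_cons, List.count_cons]
      split_ifs <;> grind

lemma pairs_of_even_count : ∀ p : List ℕ, p.Pairwise (· ≥ ·) → (∀ j, Even (p.count j)) →
    Even p.length ∧ ∀ i, p.getD (2 * i) 0 = p.getD (2 * i + 1) 0
  | [], _, _ => ⟨.zero, fun _ => rfl⟩
  | [a], _, hc => absurd (hc a) (by simp)
  | a :: b :: q, hs, hc => by
      have hab : a = b := by
        have ha : a ∈ b :: q := by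
          have := hc a
          rw [List.count_cons_self] at this
          exact List.count_pos_iff.mp (by grind)
        rcases List.mem_cons.mp ha with rfl | ha
        · rfl
        · have hge := List.rel_of_pairwise_cons hs List.mem_cons_self
          have hle := List.rel_of_pairwise_cons (List.pairwise_cons.mp hs).2 ha
          omega
      subst hab
      have hq := pairs_of_even_count q (List.pairwise_cons.mp (List.pairwise_cons.mp hs).2).2
        (fun j => by
          have := hc j
          rw [List.count_cons, List.count_cons] at this
          split_ifs at this <;> grind)
      refine ⟨by simpa [Nat.even_add_one] using hq.1, ?_⟩
      rintro (_ | i)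
      · rfl
      · simpa [Nat.mul_add] using hq.2 i

lemma mem_Ptilde_iff {p : List ℕ} : p ∈ Ptilde ↔ IsPartition p ∧ ∀ j, Even (p.count j) :=
  ⟨fun ⟨hp, hlen, hpair⟩ => ⟨hp, even_count_of_pairs p hlen hpair⟩,
    fun ⟨hp, hc⟩ => ⟨hp, pairs_of_even_count p hp.1 hc⟩⟩

lemma pmerge_mem_Qset {r p : List ℕ} (hr : r ∈ Qset) (hp : p ∈ Ptilde) : pmerge r p ∈ Qset := by
  obtain ⟨hppart, hpeven⟩ := mem_Ptilde_iff.mp hp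
  refine ⟨⟨pairwise_ge_pmerge r p, fun x hx => ?_⟩, fun j hj => ?_⟩
  · rcases List.mem_append.mp ((pmerge_perm r p).subset hx) with hx | hx
    exacts [hr.1.2 x hx, hppart.2 x hx]
  · rw [count_pmerge]
    exact (hr.2 j hj).add (hpeven j)

lemma mem_Rset_of_sortedGT {l : List ℕ} (hl : l.SortedGT) (hodd : ∀ x ∈ l, x % 2 = 1) :
    l ∈ Rset := by
  have hoddParts : oddParts l = l := List.filter_eq_self.mpr (by simpa using hodd)
  have hgetD : ∀ k (hk : k < l.length), l.getD k 0 = l[k] := fun k hk =>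
    List.getD_eq_getElem _ _ hk
  have hgetD_odd : ∀ k < l.length, l.getD k 0 % 2 = 1 := fun k hk => by
    rw [hgetD k hk]
    exact hodd _ (List.getElem_mem hk)
  refine ⟨⟨⟨hl.sortedGE.pairwise, fun x hx => ?_⟩, fun j hj => ?_⟩,
    fun hne => hgetD_odd 0 ?_, fun hne _ => hgetD_odd _ ?_, ?_, ?_⟩
  · have := hodd x hx
    omega
  · rw [List.count_eq_zero.mpr fun hjl => by have := hodd j hjl; omega]
    exact .zero
  · exact List.length_pos_iff.mpr hne
  · have := List.length_pos_iff.mpr hne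
    omega
  · intro u _ hu _
    rw [hoddParts] at hu ⊢
    rw [hgetD u (by omega), hgetD (u - 1) (by omega), hl.getElem_lt_getElem_iff]
    omega
  · intro u _ hu _ k hk
    rw [hoddParts] at hu ⊢
    rw [hgetD u (by omega), hgetD (u - 1) (by omega), hgetD k hk, hl.getElem_lt_getElem_iff,
      hl.getElem_lt_getElem_iff]
    omega

def oddMultiplicityParts (c : List ℕ) : List ℕ := c.dedup.filter (fun x => c.count x % 2 = 1)

lemma count_oddMultiplicityParts (c : List ℕ) (j : ℕ) :
    (oddMultiplicityParts c).count j = c.count j % 2 := by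
  by_cases h : c.count j % 2 = 1
  · rw [oddMultiplicityParts, List.count_filter (by simpa using h), List.count_dedup,
      if_pos (List.count_pos_iff.mp (by omega)), h]
  · rw [List.count_eq_zero.mpr fun hj => h (by simpa using (List.mem_filter.mp hj).2)]
    omega

lemma oddMultiplicityParts_sublist (c : List ℕ) : (oddMultiplicityParts c).Sublist c :=
  List.filter_sublist.trans c.dedup_sublist

lemma oddMultiplicityParts_append_diff_perm (c : List ℕ) :
    (oddMultiplicityParts c ++ c.diff (oddMultiplicityParts c)).Perm c :=
  List.subperm_append_diff_self_of_count_le fun x _ => by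
    rw [count_oddMultiplicityParts]
    exact Nat.mod_le _ _

lemma exists_mem_An_pmerge_eq {m : ℕ} {c : List ℕ} (hc : c ∈ QN m) :
    ∃ rp ∈ An m, pmerge rp.1 rp.2 = c := by
  obtain ⟨⟨hcpart, hceven⟩, hcsum⟩ := hc
  set r := oddMultiplicityParts c
  set p := c.diff r
  have hperm : (r ++ p).Perm c := oddMultiplicityParts_append_diff_perm c
  have hcount (j : ℕ) : r.count j + p.count j = c.count j := by
    rw [← List.count_append, hperm.count_eq]
  have hrnodup : r.Nodup := c.nodup_dedup.filter _
  have hrsorted : r.SortedGT :=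
    (hcpart.sublist (oddMultiplicityParts_sublist c)).1.sortedGE.sortedGT_of_nodup hrnodup
  have hrodd (x : ℕ) (hx : x ∈ r) : x % 2 = 1 := by
    have hx1 := count_oddMultiplicityParts c x
    rw [List.count_eq_one_of_mem hrnodup hx] at hx1
    by_contra hxeven
    have := Nat.even_iff.mp (hceven x (by omega))
    omega
  have hp : p ∈ Ptilde := mem_Ptilde_iff.mpr ⟨hcpart.sublist (List.diff_sublist c r), fun j => by
    have := hcount j
    rw [count_oddMultiplicityParts] at this
    exact Nat.even_iff.mpr (by omega)⟩
  refine ⟨(r, p), ⟨mem_Rset_of_sortedGT hrsorted hrodd, hp, ?_⟩, pmerge_eq_of_perm hcpart.1 hperm⟩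
  rw [← hcsum, ← hperm.sum_eq, List.sum_append]

/-- for every `𝐧`, the map `ι̃ : A_𝐧 → 𝒫¹`, `(r,p) ↦` the partition whose
parts are the disjoint union of the parts of `r` and of `p`, takes values in `𝒬_𝐧`,
and the resulting map `A_𝐧 → 𝒬_𝐧` is surjective. -/
theorem stmt5 (m : ℕ) :
    (∀ rp ∈ An m, pmerge rp.1 rp.2 ∈ QN m) ∧
    (∀ c ∈ QN m, ∃ rp ∈ An m, pmerge rp.1 rp.2 = c) :=
  ⟨fun _ ⟨hr, hp, hsum⟩ => ⟨pmerge_mem_Qset hr.1 hp, (sum_pmerge _ _).trans hsum⟩,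
    fun _ => exists_mem_An_pmerge_eq⟩
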